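/- arXiv:2510.10314 — 3 statements merged into one kernel-verified Lean document; each statement's English description precedes it below -/
import Mathlib

section
/- The tensor product of two connected bipartite graphs, each with at least one edge, is disconnected. -/
/-- The tensor product of two simple graphs. -/
def tensorProd {α β : Type*} (G : SimpleGraph α) (H : SimpleGraph β) :
    SimpleGraph (α × β) where
  Adj p q := G.Adj p.1 q.1 ∧ H.Adj p.2 q.2
  symm := ⟨fun _ _ h => ⟨h.1.symm, h.2.symm⟩⟩
  loopless := ⟨fun p h => G.loopless.irrefl p.1 h.1⟩

/-- The tensor product of two connected bipartite graphs, each with at least one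
edge, is disconnected. -/
theorem stmt12 {α β : Type*} (G : SimpleGraph α) (H : SimpleGraph β)
    (hGc : G.Connected) (hHc : H.Connected)
    (hGb : G.Colorable 2) (hHb : H.Colorable 2)
    (hGe : ∃ u v, G.Adj u v) (hHe : ∃ u v, H.Adj u v) :
    ¬ (tensorProd G H).Connected := by
  obtain ⟨cG⟩ := hGb
  obtain ⟨cH⟩ := hHb
  obtain ⟨u, v, huv⟩ := hGe
  obtain ⟨a, b, hab⟩ := hHe
  intro hcon
  have step : ∀ (x y : Fin 2), x ≠ y → ((x : ℕ) : ZMod 2) = ((y : ℕ) : ZMod 2) + 1 := by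
    decide
  set f : α × β → ZMod 2 := fun p => ((cG p.1 : ℕ) : ZMod 2) + ((cH p.2 : ℕ) : ZMod 2)
    with hf
  have key : ∀ p q, (tensorProd G H).Reachable p q → f p = f q := by
    intro p q hr
    obtain ⟨w⟩ := hr
    induction w with
    | nil => rfl
    | @cons p m q h w ih =>
      rw [← ih]
      obtain ⟨h1, h2⟩ := h
      have e1 := step _ _ (cG.valid h1)
      have e2 := step _ _ (cH.valid h2)
      simp only [hf, e1, e2]
      have h20 : (2 : ZMod 2) = 0 := by decide
      linear_combination h20
  have h1 : f (u, a) = f (u, b) := key _ _ (hcon.preconnected _ _)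
  have h2 := step _ _ (cH.valid hab)
  simp only [hf, h2] at h1
  have : (1 : ZMod 2) = 0 := by linear_combination h1
  exact one_ne_zero this
end

section
/- Let n > p with p prime. Consider the Z/pZ-linear map q from the space Tup(n,p) = {(a_1,...,a_n) ∈ (Z/pZ)^n : Σa_i = 0} to functions on k-subsets of {1,...,n}, sending (a_1,...,a_n) to the function u ↦ Σ_{i∈u} a_i where u ranges over p-element subsets. Then the kernel of q is trivial if p ∤ n, and equals the span of the all-ones vector (1,...,1) if p | n. Consequently, the image has dimension n-1 if p ∤ n and n-2 if p | n. -/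
/-- The space of `n`-tuples over `ℤ/pℤ` summing to zero. -/
def Tup (p n : ℕ) : Submodule (ZMod p) (Fin n → ZMod p) where
  carrier := {a | ∑ i, a i = 0}
  add_mem' := by
    intro a b ha hb
    simp only [Set.mem_setOf_eq, Pi.add_apply, Finset.sum_add_distrib] at *
    rw [ha, hb, add_zero]
  zero_mem' := by simp
  smul_mem' := by
    intro c a ha
    simp only [Set.mem_setOf_eq, Pi.smul_apply, smul_eq_mul] at *
    rw [← Finset.mul_sum, ha, mul_zero]

/-- The linear map sending a tuple `(a_1, ..., a_n)` to the function on
`p`-element subsets `u` of `{1, ..., n}` given by `u ↦ ∑_{i ∈ u} a_i`. -/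
def qmap (p n : ℕ) :
    (Fin n → ZMod p) →ₗ[ZMod p] ({s : Finset (Fin n) // s.card = p} → ZMod p) where
  toFun a := fun s => ∑ i ∈ s.1, a i
  map_add' a b := by
    funext s
    simp [Finset.sum_add_distrib]
  map_smul' c a := by
    funext s
    simp [Finset.mul_sum]

/-- The linear map summing the coordinates. -/
def sumMap16 (p n : ℕ) : (Fin n → ZMod p) →ₗ[ZMod p] ZMod p where
  toFun a := ∑ i, a i
  map_add' a b := by simp [Finset.sum_add_distrib]
  map_smul' c a := by simp [Finset.mul_sum]

lemma const_of_qzero16 {p n : ℕ} (hp : p.Prime) (hn : p < n) {a : Fin n → ZMod p}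
    (hq : qmap p n a = 0) (i j : Fin n) : a i = a j := by
  rcases eq_or_ne i j with rfl | hij
  · rfl
  have hp2 := hp.two_le
  obtain ⟨s, hs, hcard⟩ := Finset.exists_subset_card_eq
    (s := ({i, j}ᶜ : Finset (Fin n))) (n := p - 1) (by
    rw [Finset.card_compl, Finset.card_insert_of_notMem (by simp [hij]), Finset.card_singleton]
    simp only [Fintype.card_fin]
    omega)
  have his : i ∉ s := fun h => by simpa using hs h
  have hjs : j ∉ s := fun h => by simpa [hij] using hs h
  have hci : (insert i s).card = p := by
    rw [Finset.card_insert_of_notMem his, hcard]; omega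
  have hcj : (insert j s).card = p := by
    rw [Finset.card_insert_of_notMem hjs, hcard]; omega
  have h1 : a i + ∑ k ∈ s, a k = 0 := by
    have := congrFun hq ⟨insert i s, hci⟩
    simpa [qmap, Finset.sum_insert his] using this
  have h2 : a j + ∑ k ∈ s, a k = 0 := by
    have := congrFun hq ⟨insert j s, hcj⟩
    simpa [qmap, Finset.sum_insert hjs] using this
  exact add_right_cancel (h1.trans h2.symm)

/-- For `n > p` with `p` prime: the kernel of `q` restricted to `Tup(n,p)` is
trivial if `p ∤ n`, and is the span of the all-ones vector if `p ∣ n`; hence the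
image of `Tup(n,p)` has dimension `n - 1` if `p ∤ n` and `n - 2` if `p ∣ n`. -/
theorem stmt16 (p n : ℕ) (hp : p.Prime) (hn : p < n) :
    (¬ (p ∣ n) → ∀ a ∈ Tup p n, qmap p n a = 0 → a = 0) ∧
    ((p ∣ n) → ∀ a ∈ Tup p n,
      (qmap p n a = 0 ↔ ∃ c : ZMod p, a = fun _ => c)) ∧
    (¬ (p ∣ n) → Module.finrank (ZMod p) ((Tup p n).map (qmap p n)) = n - 1) ∧
    ((p ∣ n) → Module.finrank (ZMod p) ((Tup p n).map (qmap p n)) = n - 2) := by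
  haveI := Fact.mk hp
  have hn0 : 0 < n := lt_trans hp.pos hn
  set i0 : Fin n := ⟨0, hn0⟩ with hi0
  have hmem : ∀ a : Fin n → ZMod p, a ∈ Tup p n ↔ ∑ i, a i = 0 := fun a => Iff.rfl
  -- if a ∈ ker then a is constant and n * (that constant) = 0
  have hconst : ∀ a ∈ Tup p n, qmap p n a = 0 →
      (a = fun _ => a i0) ∧ (n : ZMod p) * a i0 = 0 := by
    intro a ha hq
    have hc : a = fun _ => a i0 := funext fun j => const_of_qzero16 hp hn hq j i0
    refine ⟨hc, ?_⟩
    have : ∑ i, a i = (n : ZMod p) * a i0 := by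
      rw [Finset.sum_congr rfl (fun j _ => const_of_qzero16 hp hn hq j i0)]
      simp [Finset.sum_const, Finset.card_univ, nsmul_eq_mul]
    rw [← this]
    exact (hmem a).mp ha
  -- Part 1
  have part1 : ¬ (p ∣ n) → ∀ a ∈ Tup p n, qmap p n a = 0 → a = 0 := by
    intro hnd a ha hq
    obtain ⟨hc, hmul⟩ := hconst a ha hq
    have hnz : (n : ZMod p) ≠ 0 := fun h =>
      hnd ((ZMod.natCast_eq_zero_iff n p).mp h)
    have h0 : a i0 = 0 := by
      rcases mul_eq_zero.mp hmul with h | h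
      · exact absurd h hnz
      · exact h
    rw [hc, h0]
    rfl
  -- Part 2
  have part2 : (p ∣ n) → ∀ a ∈ Tup p n,
      (qmap p n a = 0 ↔ ∃ c : ZMod p, a = fun _ => c) := by
    intro _ a ha
    constructor
    · intro hq
      exact ⟨a i0, (hconst a ha hq).1⟩
    · rintro ⟨c, rfl⟩
      funext s
      show ∑ _i ∈ s.1, c = 0
      rw [Finset.sum_const, s.2, nsmul_eq_mul, ZMod.natCast_self, zero_mul]
  refine ⟨part1, part2, ?_, ?_⟩ <;> intro hdvd
  all_goals {
    have hTupRank : Module.finrank (ZMod p) (Tup p n) = n - 1 := by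
      have hT : Tup p n = LinearMap.ker (sumMap16 p n) := rfl
      have hsurj : LinearMap.range (sumMap16 p n) = ⊤ := by
        rw [LinearMap.range_eq_top]
        intro c
        exact ⟨Pi.single i0 c, by simp [sumMap16]⟩
      have hadd := LinearMap.finrank_range_add_finrank_ker (sumMap16 p n)
      rw [hsurj, finrank_top, Module.finrank_self, Module.finrank_fin_fun] at hadd
      rw [hT]
      omega
    set f := (qmap p n).domRestrict (Tup p n) with hf
    have hrange : LinearMap.range f = (Tup p n).map (qmap p n) :=
      LinearMap.range_domRestrict _ _
    have hadd := LinearMap.finrank_range_add_finrank_ker f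
    rw [hrange, hTupRank] at hadd
    first
    | -- case ¬ p ∣ n : kernel trivial
      · have hker : LinearMap.ker f = ⊥ := by
          rw [Submodule.eq_bot_iff]
          intro x hx
          exact Subtype.ext (part1 hdvd x.1 x.2 hx)
        rw [hker, finrank_bot] at hadd
        omega
    | -- case p ∣ n : kernel is span of all-ones
      · have honemem : (fun _ => (1 : ZMod p)) ∈ Tup p n := by
          rw [hmem]
          simp only [Finset.sum_const, Finset.card_univ, Fintype.card_fin, nsmul_eq_mul, mul_one]
          exact (ZMod.natCast_eq_zero_iff n p).mpr hdvd
        set one : Tup p n := ⟨fun _ => (1 : ZMod p), honemem⟩ with hone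
        have honenz : one ≠ 0 := fun h => by
          have := congrFun (congrArg Subtype.val h) i0
          simp [hone] at this
        have hker : LinearMap.ker f = Submodule.span (ZMod p) {one} := by
          ext x
          rw [LinearMap.mem_ker, Submodule.mem_span_singleton]
          show qmap p n x.1 = 0 ↔ _
          rw [part2 hdvd x.1 x.2]
          constructor
          · rintro ⟨c, hc⟩
            exact ⟨c, Subtype.ext (by funext j; simp [hone, ← congrFun hc j])⟩
          · rintro ⟨c, hc⟩
            exact ⟨c, by funext j; rw [← hc]; simp [hone]⟩
        rw [hker, finrank_span_singleton honenz] at hadd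
        omega
  }
end

section
/- Let Γ be a connected triangle-free graph in which every vertex has degree exactly 3 and every pair of vertices at distance 2 has exactly 2 common neighbors. Then Γ is isomorphic to the 3-dimensional cube graph Q₃. -/
/-- The 3-dimensional cube graph `Q₃`: vertices are binary strings of length 3,
adjacent iff they differ in exactly one bit. -/
def cube3 : SimpleGraph (Fin 3 → ZMod 2) where
  Adj x y := hammingDist x y = 1
  symm := by
    constructor
    intro x y h
    rwa [hammingDist_comm]
  loopless := by
    constructor
    intro x h
    simp [hammingDist_self] at h

lemma cube_adj_iff (x y : Fin 3 → ZMod 2) :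
    cube3.Adj x y ↔ ((x 0 ≠ y 0 ∧ x 1 = y 1 ∧ x 2 = y 2) ∨ (x 0 = y 0 ∧ x 1 ≠ y 1 ∧ x 2 = y 2)
      ∨ (x 0 = y 0 ∧ x 1 = y 1 ∧ x 2 ≠ y 2)) := by
  show hammingDist x y = 1 ↔ _
  revert x y
  decide

/-- A connected triangle-free graph in which every vertex has degree 3 and every
pair of vertices at distance 2 has exactly 2 common neighbors is isomorphic to
the cube graph `Q₃`. -/
theorem stmt19 {V : Type*} [Fintype V] (G : SimpleGraph V) [DecidableRel G.Adj]
    (hconn : G.Connected) (htf : G.CliqueFree 3)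
    (hdeg : ∀ v, G.degree v = 3)
    (hcn : ∀ u v : V, G.dist u v = 2 →
      (G.neighborSet u ∩ G.neighborSet v).ncard = 2) :
    Nonempty (G ≃g cube3) := by
  classical
  have hZ1 : ¬((1:ZMod 2) = 0) := by decide
  -- triangle-freeness in adjacency form
  have htri : ∀ x y z : V, G.Adj x y → G.Adj x z → ¬ G.Adj y z := by
    intro x y z hxy hxz hyz
    exact htf {x, y, z} (SimpleGraph.is3Clique_triple_iff.mpr ⟨hxy, hxz, hyz⟩)
  -- every vertex has exactly three neighbors
  have hnbr : ∀ u : V, ∃ x y z : V, x ≠ y ∧ x ≠ z ∧ y ≠ z ∧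
      G.neighborFinset u = {x, y, z} := by
    intro u
    have h3 : (G.neighborFinset u).card = 3 := by
      rw [G.card_neighborFinset_eq_degree]; exact hdeg u
    exact Finset.card_eq_three.mp h3
  -- if x,y,z are three distinct neighbors of u, they are all of them
  have nlist : ∀ u x y z : V, x ≠ y → x ≠ z → y ≠ z → G.Adj u x → G.Adj u y → G.Adj u z →
      ∀ t, G.Adj u t → t = x ∨ t = y ∨ t = z := by
    intro u x y z hxy hxz hyz hx hy hz t ht
    have hsub : ({x, y, z} : Finset V) ⊆ G.neighborFinset u := by
      intro s hs
      simp only [Finset.mem_insert, Finset.mem_singleton] at hs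
      rcases hs with rfl | rfl | rfl <;> rwa [SimpleGraph.mem_neighborFinset]
    have hcard : ({x, y, z} : Finset V).card = 3 := by
      rw [Finset.card_insert_of_notMem (by simp [hxy, hxz]),
        Finset.card_insert_of_notMem (by simp [hyz]), Finset.card_singleton]
    have heq : ({x, y, z} : Finset V) = G.neighborFinset u :=
      Finset.eq_of_subset_of_card_le hsub (by
        rw [hcard, G.card_neighborFinset_eq_degree, hdeg])
    have : t ∈ ({x, y, z} : Finset V) := by
      rw [heq, SimpleGraph.mem_neighborFinset]; exact ht
    simpa using this
  -- two nonadjacent vertices with a common neighbor have exactly one other common neighbor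
  have pair : ∀ p q m : V, ¬ G.Adj p q → p ≠ q → G.Adj p m → G.Adj q m →
      ∃ t, t ≠ m ∧ G.Adj p t ∧ G.Adj q t ∧
        ∀ z, G.Adj p z → G.Adj q z → z = m ∨ z = t := by
    intro p q m hnadj hne hpm hqm
    have hd : G.dist p q = 2 := by
      have hle : G.dist p q ≤ 2 := by
        have := SimpleGraph.dist_le
          (SimpleGraph.Walk.cons hpm (SimpleGraph.Walk.cons hqm.symm SimpleGraph.Walk.nil))
        simpa using this
      have h0 : G.dist p q ≠ 0 := by
        intro h
        rcases SimpleGraph.dist_eq_zero_iff_eq_or_not_reachable.mp h with h | h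
        · exact hne h
        · exact h ⟨SimpleGraph.Walk.cons hpm
            (SimpleGraph.Walk.cons hqm.symm SimpleGraph.Walk.nil)⟩
      have h1 : G.dist p q ≠ 1 := fun h => hnadj (SimpleGraph.dist_eq_one_iff_adj.mp h)
      omega
    obtain ⟨x, y, hxy, hs⟩ := Set.ncard_eq_two.mp (hcn p q hd)
    have hmem : ∀ z : V, (G.Adj p z ∧ G.Adj q z) ↔ (z = x ∨ z = y) := by
      intro z
      have := Set.ext_iff.mp hs z
      simpa only [Set.mem_inter_iff, SimpleGraph.mem_neighborSet, Set.mem_insert_iff,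
        Set.mem_singleton_iff] using this
    rcases (hmem m).mp ⟨hpm, hqm⟩ with rfl | rfl
    · obtain ⟨hpy, hqy⟩ := (hmem y).mpr (Or.inr rfl)
      exact ⟨y, hxy.symm, hpy, hqy, fun z h1 h2 => (hmem z).mp ⟨h1, h2⟩⟩
    · obtain ⟨hpx, hqx⟩ := (hmem x).mpr (Or.inl rfl)
      exact ⟨x, hxy, hpx, hqx, fun z h1 h2 => ((hmem z).mp ⟨h1, h2⟩).symm⟩
  -- fix a base vertex and its three neighbors
  obtain ⟨v⟩ := hconn.nonempty
  obtain ⟨a, b, c, hab, hac, hbc, hNv⟩ := hnbr v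
  have hva : G.Adj v a := by rw [← SimpleGraph.mem_neighborFinset, hNv]; simp
  have hvb : G.Adj v b := by rw [← SimpleGraph.mem_neighborFinset, hNv]; simp
  have hvc : G.Adj v c := by rw [← SimpleGraph.mem_neighborFinset, hNv]; simp
  have hNv' : ∀ z, G.Adj v z → z = a ∨ z = b ∨ z = c := nlist v a b c hab hac hbc hva hvb hvc
  have hnab : ¬ G.Adj a b := htri v a b hva hvb
  have hnac : ¬ G.Adj a c := htri v a c hva hvc
  have hnbc : ¬ G.Adj b c := htri v b c hvb hvc
  -- the second common neighbors of the pairs among a, b, c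
  obtain ⟨xab, hxabv, haxab, hbxab, huab⟩ := pair a b v hnab hab hva.symm hvb.symm
  obtain ⟨xac, hxacv, haxac, hcxac, huac⟩ := pair a c v hnac hac hva.symm hvc.symm
  obtain ⟨xbc, hxbcv, hbxbc, hcxbc, hubc⟩ := pair b c v hnbc hbc hvb.symm hvc.symm
  have haexab : a ≠ xab := G.ne_of_adj haxab
  have hbexab : b ≠ xab := G.ne_of_adj hbxab
  have hcexab : c ≠ xab := by rintro rfl; exact hnac haxab
  have haexac : a ≠ xac := G.ne_of_adj haxac
  have hbexac : b ≠ xac := by rintro rfl; exact hnab haxac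
  have hcexac : c ≠ xac := G.ne_of_adj hcxac
  have haexbc : a ≠ xbc := by rintro rfl; exact hnab hbxbc.symm
  have hbexbc : b ≠ xbc := G.ne_of_adj hbxbc
  have hcexbc : c ≠ xbc := G.ne_of_adj hcxbc
  have nva : v ≠ a := G.ne_of_adj hva
  have nvb : v ≠ b := G.ne_of_adj hvb
  have nvc : v ≠ c := G.ne_of_adj hvc
  have hnvxab : ¬ G.Adj v xab := by
    intro h
    rcases hNv' xab h with h1 | h1 | h1
    · exact haexab h1.symm
    · exact hbexab h1.symm
    · exact hcexab h1.symm
  have hnvxac : ¬ G.Adj v xac := by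
    intro h
    rcases hNv' xac h with h1 | h1 | h1
    · exact haexac h1.symm
    · exact hbexac h1.symm
    · exact hcexac h1.symm
  have hnvxbc : ¬ G.Adj v xbc := by
    intro h
    rcases hNv' xbc h with h1 | h1 | h1
    · exact haexbc h1.symm
    · exact hbexbc h1.symm
    · exact hcexbc h1.symm
  -- the three new vertices are pairwise distinct
  have hxabxac : xab ≠ xac := by
    intro h
    obtain ⟨t, _, _, _, huu⟩ := pair v xab a hnvxab (Ne.symm hxabv) hva haxab.symm
    have hxabc : G.Adj xab c := by rw [h]; exact hcxac.symm
    rcases huu b hvb hbxab.symm with h1 | h1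
    · exact hab h1.symm
    · rcases huu c hvc hxabc with h2 | h2
      · exact hac h2.symm
      · exact hbc (h1.trans h2.symm)
  have hxabxbc : xab ≠ xbc := by
    intro h
    obtain ⟨t, _, _, _, huu⟩ := pair v xab b hnvxab (Ne.symm hxabv) hvb hbxab.symm
    have hxabc : G.Adj xab c := by rw [h]; exact hcxbc.symm
    rcases huu a hva haxab.symm with h1 | h1
    · exact hab h1
    · rcases huu c hvc hxabc with h2 | h2
      · exact hbc h2.symm
      · exact hac (h1.trans h2.symm)
  have hxacxbc : xac ≠ xbc := by
    intro h
    obtain ⟨t, _, _, _, huu⟩ := pair v xac c hnvxac (Ne.symm hxacv) hvc hcxac.symm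
    have hxacb : G.Adj xac b := by rw [h]; exact hbxbc.symm
    rcases huu a hva haxac.symm with h1 | h1
    · exact hac h1
    · rcases huu b hvb hxacb with h2 | h2
      · exact hbc h2
      · exact hab (h1.trans h2.symm)
  -- full neighborhoods of a, b, c
  have hNa : ∀ z, G.Adj a z → z = v ∨ z = xab ∨ z = xac :=
    nlist a v xab xac (Ne.symm hxabv) (Ne.symm hxacv) hxabxac hva.symm haxab haxac
  have hNb : ∀ z, G.Adj b z → z = v ∨ z = xab ∨ z = xbc :=
    nlist b v xab xbc (Ne.symm hxabv) (Ne.symm hxbcv) hxabxbc hvb.symm hbxab hbxbc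
  have hNc : ∀ z, G.Adj c z → z = v ∨ z = xac ∨ z = xbc :=
    nlist c v xac xbc (Ne.symm hxacv) (Ne.symm hxbcv) hxacxbc hvc.symm hcxac hcxbc
  -- the eighth vertex
  have hnxx1 : ¬ G.Adj xab xac := htri a xab xac haxab haxac
  have hnxx2 : ¬ G.Adj xab xbc := htri b xab xbc hbxab hbxbc
  have hnxx3 : ¬ G.Adj xac xbc := htri c xac xbc hcxac hcxbc
  obtain ⟨w, hwa, hxabw, hxacw, huw⟩ := pair xab xac a hnxx1 hxabxac haxab.symm haxac.symm
  have haw : a ≠ w := Ne.symm hwa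
  have hbw : b ≠ w := by
    intro h
    have hbxac : G.Adj b xac := by rw [h]; exact hxacw.symm
    rcases hNb xac hbxac with h1 | h1 | h1
    · exact hxacv h1
    · exact hxabxac h1.symm
    · exact hxacxbc h1
  have hcw : c ≠ w := by
    intro h
    have hcxab : G.Adj c xab := by rw [h]; exact hxabw.symm
    rcases hNc xab hcxab with h1 | h1 | h1
    · exact hxabv h1
    · exact hxabxac h1
    · exact hxabxbc h1
  have hNxab : ∀ z, G.Adj xab z → z = a ∨ z = b ∨ z = w :=
    nlist xab a b w hab haw hbw haxab.symm hbxab.symm hxabw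
  -- w is also adjacent to xbc
  have hxbcw : G.Adj xbc w := by
    obtain ⟨ww, hwwb, hxabww, hxbcww, _⟩ := pair xab xbc b hnxx2 hxabxbc hbxab.symm hbxbc.symm
    have hwww : ww = w := by
      rcases hNxab ww hxabww with h1 | h1 | h1
      · exfalso
        have haxbc : G.Adj a xbc := by rw [← h1]; exact hxbcww.symm
        rcases hNa xbc haxbc with h2 | h2 | h2
        · exact hxbcv h2
        · exact hxabxbc h2.symm
        · exact hxacxbc h2.symm
      · exact absurd h1 hwwb
      · exact h1
    rw [← hwww]; exact hxbcww
  have hNxac : ∀ z, G.Adj xac z → z = a ∨ z = c ∨ z = w :=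
    nlist xac a c w hac haw hcw haxac.symm hcxac.symm hxacw
  have hNxbc : ∀ z, G.Adj xbc z → z = b ∨ z = c ∨ z = w :=
    nlist xbc b c w hbc hbw hcw hbxbc.symm hcxbc.symm hxbcw
  have hvw : v ≠ w := by
    intro h
    exact hnvxab (by rw [h]; exact hxabw.symm)
  have hxabnew : xab ≠ w := G.ne_of_adj hxabw
  have hxacnew : xac ≠ w := G.ne_of_adj hxacw
  have hxbcnew : xbc ≠ w := G.ne_of_adj hxbcw
  have hNw : ∀ z, G.Adj w z → z = xab ∨ z = xac ∨ z = xbc :=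
    nlist w xab xac xbc hxabxac hxabxbc hxacxbc hxabw.symm hxacw.symm hxbcw.symm
  -- remaining non-adjacencies
  have hnvw : ¬ G.Adj v w := by
    intro h
    rcases hNv' w h with h1 | h1 | h1
    · exact haw h1.symm
    · exact hbw h1.symm
    · exact hcw h1.symm
  have hnaxbc : ¬ G.Adj a xbc := by
    intro h
    rcases hNa xbc h with h1 | h1 | h1
    · exact hxbcv h1
    · exact hxabxbc h1.symm
    · exact hxacxbc h1.symm
  have hnaw : ¬ G.Adj a w := by
    intro h
    rcases hNa w h with h1 | h1 | h1
    · exact hvw h1.symm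
    · exact hxabnew h1.symm
    · exact hxacnew h1.symm
  have hnbxac : ¬ G.Adj b xac := by
    intro h
    rcases hNb xac h with h1 | h1 | h1
    · exact hxacv h1
    · exact hxabxac h1.symm
    · exact hxacxbc h1
  have hnbw : ¬ G.Adj b w := by
    intro h
    rcases hNb w h with h1 | h1 | h1
    · exact hvw h1.symm
    · exact hxabnew h1.symm
    · exact hxbcnew h1.symm
  have hncxab : ¬ G.Adj c xab := by
    intro h
    rcases hNc xab h with h1 | h1 | h1
    · exact hxabv h1
    · exact hxabxac h1
    · exact hxabxbc h1
  have hncw : ¬ G.Adj c w := by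
    intro h
    rcases hNc w h with h1 | h1 | h1
    · exact hvw h1.symm
    · exact hxacnew h1.symm
    · exact hxbcnew h1.symm
  -- directed versions of all adjacency facts, for `assumption`
  have hav : G.Adj a v := hva.symm
  have hbv : G.Adj b v := hvb.symm
  have hcv : G.Adj c v := hvc.symm
  have hxaba : G.Adj xab a := haxab.symm
  have hxabb : G.Adj xab b := hbxab.symm
  have hxaca : G.Adj xac a := haxac.symm
  have hxacc : G.Adj xac c := hcxac.symm
  have hxbcb : G.Adj xbc b := hbxbc.symm
  have hxbcc : G.Adj xbc c := hcxbc.symm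
  have hwxab : G.Adj w xab := hxabw.symm
  have hwxac : G.Adj w xac := hxacw.symm
  have hwxbc : G.Adj w xbc := hxbcw.symm
  have hnba : ¬ G.Adj b a := fun h => hnab h.symm
  have hnca : ¬ G.Adj c a := fun h => hnac h.symm
  have hncb : ¬ G.Adj c b := fun h => hnbc h.symm
  have hnxabv : ¬ G.Adj xab v := fun h => hnvxab h.symm
  have hnxacv : ¬ G.Adj xac v := fun h => hnvxac h.symm
  have hnxbcv : ¬ G.Adj xbc v := fun h => hnvxbc h.symm
  have hnwv : ¬ G.Adj w v := fun h => hnvw h.symm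
  have hnxbca : ¬ G.Adj xbc a := fun h => hnaxbc h.symm
  have hnwa : ¬ G.Adj w a := fun h => hnaw h.symm
  have hnxacb : ¬ G.Adj xac b := fun h => hnbxac h.symm
  have hnwb : ¬ G.Adj w b := fun h => hnbw h.symm
  have hnxabc : ¬ G.Adj xab c := fun h => hncxab h.symm
  have hnwc : ¬ G.Adj w c := fun h => hncw h.symm
  have hnxx1' : ¬ G.Adj xac xab := fun h => hnxx1 h.symm
  have hnxx2' : ¬ G.Adj xbc xab := fun h => hnxx2 h.symm
  have hnxx3' : ¬ G.Adj xbc xac := fun h => hnxx3 h.symm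
  have hlv : ¬ G.Adj v v := G.loopless.irrefl v
  have hla : ¬ G.Adj a a := G.loopless.irrefl a
  have hlb : ¬ G.Adj b b := G.loopless.irrefl b
  have hlc : ¬ G.Adj c c := G.loopless.irrefl c
  have hlxab : ¬ G.Adj xab xab := G.loopless.irrefl xab
  have hlxac : ¬ G.Adj xac xac := G.loopless.irrefl xac
  have hlxbc : ¬ G.Adj xbc xbc := G.loopless.irrefl xbc
  have hlw : ¬ G.Adj w w := G.loopless.irrefl w
  -- every vertex is one of the eight
  have hstep : ∀ s t : V, G.Adj s t →
      (s = v ∨ s = a ∨ s = b ∨ s = c ∨ s = xab ∨ s = xac ∨ s = xbc ∨ s = w) →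
      (t = v ∨ t = a ∨ t = b ∨ t = c ∨ t = xab ∨ t = xac ∨ t = xbc ∨ t = w) := by
    intro s t hadj hs
    rcases hs with rfl | rfl | rfl | rfl | rfl | rfl | rfl | rfl
    · rcases hNv' t hadj with rfl | rfl | rfl <;> simp
    · rcases hNa t hadj with rfl | rfl | rfl <;> simp
    · rcases hNb t hadj with rfl | rfl | rfl <;> simp
    · rcases hNc t hadj with rfl | rfl | rfl <;> simp
    · rcases hNxab t hadj with rfl | rfl | rfl <;> simp
    · rcases hNxac t hadj with rfl | rfl | rfl <;> simp
    · rcases hNxbc t hadj with rfl | rfl | rfl <;> simp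
    · rcases hNw t hadj with rfl | rfl | rfl <;> simp
  have hall : ∀ u : V,
      u = v ∨ u = a ∨ u = b ∨ u = c ∨ u = xab ∨ u = xac ∨ u = xbc ∨ u = w := by
    have hwalk : ∀ (s u : V), G.Walk s u →
        (s = v ∨ s = a ∨ s = b ∨ s = c ∨ s = xab ∨ s = xac ∨ s = xbc ∨ s = w) →
        (u = v ∨ u = a ∨ u = b ∨ u = c ∨ u = xab ∨ u = xac ∨ u = xbc ∨ u = w) := by
      intro s u p
      induction p with
      | nil => exact id
      | cons h q ih => exact fun hs => ih (hstep _ _ h hs)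
    intro u
    obtain ⟨p⟩ := hconn.preconnected v u
    exact hwalk v u p (Or.inl rfl)
  -- the isomorphism
  set f : (Fin 3 → ZMod 2) → V := fun x =>
    if x 0 = 0 then
      if x 1 = 0 then (if x 2 = 0 then v else c) else (if x 2 = 0 then b else xbc)
    else
      if x 1 = 0 then (if x 2 = 0 then a else xac) else (if x 2 = 0 then xab else w)
    with hfdef
  have e000 : f ![0,0,0] = v := by rw [hfdef]; simp
  have e001 : f ![0,0,1] = c := by rw [hfdef]; simp
  have e010 : f ![0,1,0] = b := by rw [hfdef]; simp
  have e011 : f ![0,1,1] = xbc := by rw [hfdef]; simp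
  have e100 : f ![1,0,0] = a := by rw [hfdef]; simp
  have e101 : f ![1,0,1] = xac := by rw [hfdef]; simp
  have e110 : f ![1,1,0] = xab := by rw [hfdef]; simp
  have e111 : f ![1,1,1] = w := by rw [hfdef]; simp
  have hsurj : Function.Surjective f := by
    intro u
    rcases hall u with rfl | rfl | rfl | rfl | rfl | rfl | rfl | rfl
    · exact ⟨![0,0,0], e000⟩
    · exact ⟨![1,0,0], e100⟩
    · exact ⟨![0,1,0], e010⟩
    · exact ⟨![0,0,1], e001⟩
    · exact ⟨![1,1,0], e110⟩
    · exact ⟨![1,0,1], e101⟩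
    · exact ⟨![0,1,1], e011⟩
    · exact ⟨![1,1,1], e111⟩
  have hcard8 : Fintype.card (Fin 3 → ZMod 2) = 8 := by simp
  have hs8 : ({v, a, b, c, xab, xac, xbc, w} : Finset V).card = 8 := by
    rw [Finset.card_insert_of_notMem (by
        simp [nva, nvb, nvc, Ne.symm hxabv, Ne.symm hxacv, Ne.symm hxbcv, hvw]),
      Finset.card_insert_of_notMem (by
        simp [hab, hac, haexab, haexac, haexbc, haw]),
      Finset.card_insert_of_notMem (by
        simp [hbc, hbexab, hbexac, hbexbc, hbw]),
      Finset.card_insert_of_notMem (by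
        simp [hcexab, hcexac, hcexbc, hcw]),
      Finset.card_insert_of_notMem (by
        simp [hxabxac, hxabxbc, hxabnew]),
      Finset.card_insert_of_notMem (by
        simp [hxacxbc, hxacnew]),
      Finset.card_insert_of_notMem (by simp [hxbcnew]),
      Finset.card_singleton]
  have hcardV : Fintype.card V = 8 := by
    have hle := Fintype.card_le_of_surjective f hsurj
    rw [hcard8] at hle
    have hge := Finset.card_le_univ ({v, a, b, c, xab, xac, xbc, w} : Finset V)
    rw [hs8] at hge
    omega
  have hbij : Function.Bijective f :=
    (Fintype.bijective_iff_surjective_and_card f).mpr ⟨hsurj, by rw [hcard8, hcardV]⟩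
  refine ⟨SimpleGraph.Iso.symm ⟨Equiv.ofBijective f hbij, ?_⟩⟩
  intro x y
  show G.Adj (f x) (f y) ↔ cube3.Adj x y
  have h2v : ∀ z : ZMod 2, z = 0 ∨ z = 1 := by decide
  rcases h2v (x 0) with hx0 | hx0 <;> rcases h2v (x 1) with hx1 | hx1 <;>
    rcases h2v (x 2) with hx2 | hx2 <;> rcases h2v (y 0) with hy0 | hy0 <;>
    rcases h2v (y 1) with hy1 | hy1 <;> rcases h2v (y 2) with hy2 | hy2 <;>
    (rw [cube_adj_iff]
     simp only [hfdef, hx0, hx1, hx2, hy0, hy1, hy2, if_neg hZ1, reduceIte]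
     first
       | exact iff_of_true (by assumption) (by decide)
       | exact iff_of_false (by assumption) (by decide))
end
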